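/- Let f : ℝ^d → ℝ be convex and L-smooth (differentiable with L-Lipschitz gradient, L > 0), bounded below with f* := inf f. Let E be a positive integer, w_0 ∈ ℝ^d, and define gradient-descent iterates w_{τ+1} = w_τ − η ∇f(w_τ) with step size 0 < η ≤ 1/(2L). Let u := Σ_{τ=0}^{E−1} ∇f(w_τ) and assume u ≠ 0. Fix w* ∈ ℝ^d, set Δ := f(w*) − f*, and let Ĉ ≥ 4√(L Δ). Define the normalized update g := (Ĉ·E/‖u‖)·u and A := −2η⟨g, w_0 − w*⟩ + η²‖g‖². Then: if ‖u‖ ≤ Ĉ·E, A ≤ ηE{4η²L²E²·Δ·(ĈE/‖u‖) + ηĈ²E − (2 − 4η²L²E²)·(ĈE/‖u‖)·(f(w_0) − f(w*))}; and if ‖u‖ > Ĉ·E, A ≤ −ηE·(3Ĉ/(8LE))·‖u‖. -/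

import Mathlib

/-!
Everything rests on two lower bounds for `P = ⟪u, w₀ - w*⟫`. Splitting
`w₀ - w* = (w₀ - w_τ) + (w_τ - w*)`, the descent lemma and convexity give
`⟪∇f(w_τ), w₀ - w*⟫ ≥ f(w₀) - f(w*) - (L/2)‖w₀ - w_τ‖²`, and the drift `‖w₀ - w_τ‖ ≤ ητ max‖∇f‖`
is small because `‖∇f(w_τ)‖² ≤ 2L(f(w_τ) - f*) ≤ 2L(f(w₀) - f*)` along the monotone descent; this
handles `‖u‖ ≤ ĈE`. On the other hand, telescoping the iteration gives
`P = (η/2)(‖u‖² - Σ‖∇f(w_τ)‖²) + Σ⟪∇f(w_τ), w_τ - w*⟫`, and convexity together with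
`‖∇f‖² ≤ 2L(f - f*)` and `‖u‖² ≤ E Σ‖∇f(w_τ)‖²` yields `4LE(P + EΔ) ≥ (1 + 2LEη)‖u‖²`; when
`‖u‖ > ĈE ≥ 4E√(LΔ)` the term `EΔ` is absorbed, which gives the second case.
-/

open scoped RealInnerProductSpace
open Finset

section Sums

variable {F : Type*} [NormedAddCommGroup F]

lemma sq_norm_sum_le_card_mul {ι : Type*} (s : Finset ι) (v : ι → F) :
    ‖∑ i ∈ s, v i‖ ^ 2 ≤ #s * ∑ i ∈ s, ‖v i‖ ^ 2 :=
  (pow_le_pow_left₀ (norm_nonneg _) (norm_sum_le s v) 2).trans sq_sum_le_card_mul_sum_sq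

variable [InnerProductSpace ℝ F] {w v : ℕ → F} {η : ℝ}

lemma sub_eq_smul_sum_of_sub_smul (hw : ∀ τ, w (τ + 1) = w τ - η • v τ) (n : ℕ) :
    w 0 - w n = η • ∑ s ∈ range n, v s := by
  induction n with
  | zero => simp
  | succ n ih => rw [sum_range_succ, hw n, smul_add, ← ih]; abel

lemma inner_sum_sub_eq_of_sub_smul (hw : ∀ τ, w (τ + 1) = w τ - η • v τ) (z : F) (n : ℕ) :
    ⟪∑ τ ∈ range n, v τ, w 0 - z⟫ = η / 2 * (‖∑ τ ∈ range n, v τ‖ ^ 2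
      - ∑ τ ∈ range n, ‖v τ‖ ^ 2) + ∑ τ ∈ range n, ⟪v τ, w τ - z⟫ := by
  induction n with
  | zero => simp
  | succ n ih =>
    have hsplit : w 0 - z = (w 0 - w n) + (w n - z) := by abel
    rw [sum_range_succ, inner_add_left, ih, norm_add_sq_real, hsplit, inner_add_right,
      sub_eq_smul_sum_of_sub_smul hw, real_inner_smul_right, real_inner_comm, sum_range_succ,
      sum_range_succ]
    ring

end Sums

section Smooth

variable {F : Type*} [NormedAddCommGroup F] [InnerProductSpace ℝ F] [CompleteSpace F]
  {f : F → ℝ} {L : ℝ}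

lemma hasDerivAt_comp_add_smul {x v : F} {t : ℝ} (hf : DifferentiableAt ℝ f (x + t • v)) :
    HasDerivAt (fun s : ℝ => f (x + s • v)) ⟪gradient f (x + t • v), v⟫ t := by
  have hline : HasDerivAt (fun s : ℝ => x + s • v) v t := by
    simpa using ((hasDerivAt_id t).smul_const v).const_add x
  simpa [InnerProductSpace.toDual_apply_apply, Function.comp_def] using
    hf.hasGradientAt.hasFDerivAt.comp_hasDerivAt t hline

lemma ConvexOn.add_inner_gradient_le (hf : ConvexOn ℝ Set.univ f) {x : F}
    (hx : DifferentiableAt ℝ f x) (y : F) : f x + ⟪gradient f x, y - x⟫ ≤ f y := by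
  have hline : ConvexOn ℝ Set.univ (fun t : ℝ => f (x + t • (y - x))) := by
    have h := hf.comp_affineMap (AffineMap.lineMap x y)
    rwa [Set.preimage_univ, show f ∘ AffineMap.lineMap x y = fun t : ℝ => f (x + t • (y - x)) by
      ext t; simp [AffineMap.lineMap_apply_module', add_comm]] at h
  have hslope := hline.le_slope_of_hasDerivAt (Set.mem_univ 0) (Set.mem_univ 1) zero_lt_one
    (hasDerivAt_comp_add_smul (t := 0) (by simpa using hx))
  simp only [slope_def_field, zero_smul, add_zero, one_smul, add_sub_cancel, sub_zero,
    div_one] at hslope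
  linarith

variable (hf : Differentiable ℝ f) (hlip : ∀ x y, ‖gradient f x - gradient f y‖ ≤ L * ‖x - y‖)
include hf hlip

lemma le_add_inner_gradient_add_sq (x y : F) :
    f y ≤ f x + ⟪gradient f x, y - x⟫ + L / 2 * ‖y - x‖ ^ 2 := by
  set v := y - x
  set ψ : ℝ → ℝ := fun t => f (x + t • v) - t * ⟪gradient f x, v⟫ - L / 2 * t ^ 2 * ‖v‖ ^ 2
  have hψ : ∀ t : ℝ, HasDerivAt ψ
      (⟪gradient f (x + t • v) - gradient f x, v⟫ - L * t * ‖v‖ ^ 2) t := by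
    intro t
    have hquad := ((hasDerivAt_pow 2 t).const_mul (L / 2)).mul_const (‖v‖ ^ 2)
    have := ((hasDerivAt_comp_add_smul (x := x) (v := v) (hf _)).sub
      ((hasDerivAt_id t).mul_const ⟪gradient f x, v⟫)).sub hquad
    exact this.congr_deriv (by rw [inner_sub_left]; push_cast; ring)
  have hanti : AntitoneOn ψ (Set.Icc 0 1) := by
    refine antitoneOn_of_deriv_nonpos (convex_Icc 0 1)
      (fun t _ => (hψ t).continuousAt.continuousWithinAt)
      (fun t _ => (hψ t).differentiableAt.differentiableWithinAt) fun t ht => ?_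
    rw [interior_Icc] at ht
    rw [(hψ t).deriv, sub_nonpos]
    calc ⟪gradient f (x + t • v) - gradient f x, v⟫
        ≤ ‖gradient f (x + t • v) - gradient f x‖ * ‖v‖ := real_inner_le_norm _ _
      _ ≤ L * ‖x + t • v - x‖ * ‖v‖ := by gcongr; exact hlip _ _
      _ = L * t * ‖v‖ ^ 2 := by
          simp only [add_sub_cancel_left, norm_smul, Real.norm_eq_abs, abs_of_pos ht.1]; ring
  have h01 := hanti (Set.left_mem_Icc.mpr zero_le_one) (Set.right_mem_Icc.mpr zero_le_one)
    zero_le_one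
  simp only [ψ, v, zero_smul, add_zero, one_smul, add_sub_cancel, zero_mul, sub_zero,
    one_mul, one_pow, ne_eq, OfNat.ofNat_ne_zero, not_false_eq_true, zero_pow] at h01
  linarith

lemma apply_sub_smul_gradient_le (η : ℝ) (x : F) :
    f (x - η • gradient f x) ≤ f x - η * (1 - L * η / 2) * ‖gradient f x‖ ^ 2 := by
  have h := le_add_inner_gradient_add_sq hf hlip x (x - η • gradient f x)
  rw [sub_sub_cancel_left, inner_neg_right, real_inner_smul_right, real_inner_self_eq_norm_sq,
    norm_neg, norm_smul, Real.norm_eq_abs, mul_pow, sq_abs] at h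
  linarith

lemma sq_norm_gradient_le (hL : 0 < L) {m : ℝ} (hlow : ∀ x, m ≤ f x) (x : F) :
    ‖gradient f x‖ ^ 2 ≤ 2 * L * (f x - m) := by
  have h := apply_sub_smul_gradient_le hf hlip L⁻¹ x
  rw [show L⁻¹ * (1 - L * L⁻¹ / 2) = (2 * L)⁻¹ by field_simp; ring] at h
  have := hlow (x - L⁻¹ • gradient f x)
  rw [← inv_mul_le_iff₀ (by positivity)]
  linarith

lemma inner_gradient_sub_ge (hconv : ConvexOn ℝ Set.univ f) (x y z : F) :
    f x - f y - L / 2 * ‖x - z‖ ^ 2 ≤ ⟪gradient f z, x - y⟫ := by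
  have hlower := hconv.add_inner_gradient_le (hf z) y
  have hupper := le_add_inner_gradient_add_sq hf hlip z x
  have hsplit : ⟪gradient f z, x - y⟫ = ⟪gradient f z, x - z⟫ - ⟪gradient f z, y - z⟫ := by
    rw [← inner_sub_right, sub_sub_sub_cancel_right]
  linarith

variable {w : ℕ → F} {η m : ℝ} (hw : ∀ τ, w (τ + 1) = w τ - η • gradient f (w τ))
include hw

lemma apply_iterate_le_apply_zero (hη : 0 ≤ η) (hηL : L * η ≤ 2) (τ : ℕ) :
    f (w τ) ≤ f (w 0) := by
  refine antitone_nat_of_succ_le (f := fun n => f (w n)) (fun n => ?_) (Nat.zero_le τ)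
  have h := apply_sub_smul_gradient_le hf hlip η (w n)
  rw [← hw n] at h
  have : 0 ≤ η * (1 - L * η / 2) * ‖gradient f (w n)‖ ^ 2 := by
    have : 0 ≤ 1 - L * η / 2 := by linarith
    positivity
  linarith

lemma sq_norm_sub_iterate_le (hL : 0 < L) (hlow : ∀ x, m ≤ f x) (hη : 0 ≤ η)
    (hηL : L * η ≤ 2) (τ : ℕ) :
    ‖w 0 - w τ‖ ^ 2 ≤ η ^ 2 * τ ^ 2 * (2 * L * (f (w 0) - m)) := by
  have hgrad : ∀ s, ‖gradient f (w s)‖ ^ 2 ≤ 2 * L * (f (w 0) - m) := fun s =>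
    (sq_norm_gradient_le hf hlip hL hlow (w s)).trans
      (by gcongr; exact apply_iterate_le_apply_zero hf hlip hw hη hηL s)
  calc ‖w 0 - w τ‖ ^ 2
      = η ^ 2 * ‖∑ s ∈ range τ, gradient f (w s)‖ ^ 2 := by
        rw [sub_eq_smul_sum_of_sub_smul hw, norm_smul, mul_pow, Real.norm_eq_abs, sq_abs]
    _ ≤ η ^ 2 * (τ * ∑ s ∈ range τ, ‖gradient f (w s)‖ ^ 2) := by
        gcongr; simpa using sq_norm_sum_le_card_mul (range τ) fun s => gradient f (w s)
    _ ≤ η ^ 2 * (τ * ∑ s ∈ range τ, 2 * L * (f (w 0) - m)) := by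
        gcongr with s; exact hgrad s
    _ = η ^ 2 * τ ^ 2 * (2 * L * (f (w 0) - m)) := by
        rw [sum_const, card_range, nsmul_eq_mul]; ring

lemma mul_sub_le_inner_sum_gradient (hconv : ConvexOn ℝ Set.univ f) (hL : 0 < L)
    (hlow : ∀ x, m ≤ f x) (hη : 0 ≤ η) (hηL : L * η ≤ 2) (z : F) (n : ℕ) :
    n * (f (w 0) - f z) - η ^ 2 * L ^ 2 * n ^ 3 * (f (w 0) - m)
      ≤ ⟪∑ τ ∈ range n, gradient f (w τ), w 0 - z⟫ := by
  have hgap : 0 ≤ f (w 0) - m := sub_nonneg.mpr (hlow (w 0))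
  have hterm : ∀ τ ∈ range n, f (w 0) - f z - η ^ 2 * L ^ 2 * n ^ 2 * (f (w 0) - m)
      ≤ ⟪gradient f (w τ), w 0 - z⟫ := by
    intro τ hτ
    have hτn : (τ : ℝ) ≤ n := by exact_mod_cast (mem_range.mp hτ).le
    have hdrift := sq_norm_sub_iterate_le hf hlip hw hL hlow hη hηL τ
    have hsmooth := inner_gradient_sub_ge hf hlip hconv (w 0) z (w τ)
    have : η ^ 2 * L ^ 2 * τ ^ 2 * (f (w 0) - m) ≤ η ^ 2 * L ^ 2 * n ^ 2 * (f (w 0) - m) := by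
      gcongr
    nlinarith
  calc n * (f (w 0) - f z) - η ^ 2 * L ^ 2 * n ^ 3 * (f (w 0) - m)
      = ∑ τ ∈ range n, (f (w 0) - f z - η ^ 2 * L ^ 2 * n ^ 2 * (f (w 0) - m)) := by
        rw [sum_sub_distrib, sum_const, sum_const, card_range, nsmul_eq_mul, nsmul_eq_mul]; ring
    _ ≤ ⟪∑ τ ∈ range n, gradient f (w τ), w 0 - z⟫ := by
        rw [sum_inner]; exact sum_le_sum hterm

lemma sq_norm_sum_gradient_le_inner (hconv : ConvexOn ℝ Set.univ f) (hL : 0 < L)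
    (hlow : ∀ x, m ≤ f x) (hηL : 2 * L * η ≤ 1) (z : F) (n : ℕ) :
    (1 + 2 * L * n * η) * ‖∑ τ ∈ range n, gradient f (w τ)‖ ^ 2
      ≤ 4 * L * n * (⟪∑ τ ∈ range n, gradient f (w τ), w 0 - z⟫ + n * (f z - m)) := by
  set S := ∑ τ ∈ range n, ‖gradient f (w τ)‖ ^ 2
  have hsplit := inner_sum_sub_eq_of_sub_smul hw z n
  have hconvex : ∑ τ ∈ range n, (f (w τ) - f z) ≤ ∑ τ ∈ range n, ⟪gradient f (w τ), w τ - z⟫ :=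
    sum_le_sum fun τ _ => by
      have h := hconv.add_inner_gradient_le (hf (w τ)) z
      rw [← neg_sub, inner_neg_right] at h
      linarith
  have hgrad : S ≤ 2 * L * ∑ τ ∈ range n, (f (w τ) - f z) + 2 * L * n * (f z - m) := by
    calc S ≤ ∑ τ ∈ range n, 2 * L * (f (w τ) - m) :=
          sum_le_sum fun τ _ => sq_norm_gradient_le hf hlip hL hlow (w τ)
      _ = ∑ τ ∈ range n, (2 * L * (f (w τ) - f z) + 2 * L * (f z - m)) :=
          sum_congr rfl fun τ _ => by ring
      _ = _ := by rw [sum_add_distrib, ← mul_sum, sum_const, card_range, nsmul_eq_mul]; ring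
  have hcs : ‖∑ τ ∈ range n, gradient f (w τ)‖ ^ 2 ≤ n * S := by
    simpa using sq_norm_sum_le_card_mul (range n) fun τ => gradient f (w τ)
  have hS : 0 ≤ n * S * (1 - 2 * L * η) := by
    have : 0 ≤ S := sum_nonneg fun τ _ => by positivity
    have : 0 ≤ 1 - 2 * L * η := by linarith
    positivity
  rw [hsplit]
  linarith [mul_le_mul_of_nonneg_left hconvex (by positivity : (0 : ℝ) ≤ 4 * L * n),
    mul_le_mul_of_nonneg_left hgrad (by positivity : (0 : ℝ) ≤ 2 * n)]

end Smooth

lemma clipped_step_le {L η C E Δ r P : ℝ} (hL : 0 < L) (hη : 0 ≤ η) (hC : 0 ≤ C) (hE : 0 < E)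
    (hΔ : 16 * L * Δ ≤ C ^ 2) (hr : C * E < r)
    (hP : (1 + 2 * L * E * η) * r ^ 2 ≤ 4 * L * E * (P + E * Δ)) :
    -2 * η * (C * E / r) * P + η ^ 2 * (C * E) ^ 2 ≤ -(η * E) * (3 * C / (8 * L * E)) * r := by
  have hr0 : 0 < r := lt_of_le_of_lt (by positivity) hr
  have hΔr : 16 * L * E ^ 2 * Δ ≤ r ^ 2 := by
    nlinarith [pow_le_pow_left₀ (by positivity) hr.le 2]
  have hP' := mul_le_mul_of_nonneg_left hP (by positivity : 0 ≤ 4 * η * C)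
  have hΔr' := mul_le_mul_of_nonneg_left hΔr (by positivity : 0 ≤ η * C)
  have hexcess : 0 ≤ 8 * L * η ^ 2 * C * E * r * (r - C * E) := by
    have : 0 ≤ r - C * E := by linarith
    positivity
  rw [show -(η * E) * (3 * C / (8 * L * E)) * r = -3 * η * C * r ^ 2 / (8 * L * r) by
    field_simp, le_div_iff₀ (by positivity)]
  rw [show (-2 * η * (C * E / r) * P + η ^ 2 * (C * E) ^ 2) * (8 * L * r)
    = -16 * L * η * C * E * P + 8 * L * η ^ 2 * (C * E) ^ 2 * r by field_simp; ring]
  nlinarith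

/-- Combined per-client bound (equation feb4-4) in the proof of Theorem E.1:
core deterministic step in the convergence analysis of DP-NormFedAvg. -/
theorem stmt_17 {d : ℕ} (f : EuclideanSpace ℝ (Fin d) → ℝ) (L : ℝ) (hL : 0 < L)
    (hconv : ConvexOn ℝ Set.univ f)
    (hdiff : Differentiable ℝ f)
    (hlip : ∀ x y, ‖gradient f x - gradient f y‖ ≤ L * ‖x - y‖)
    (fstar : ℝ) (hfstar : IsGLB (Set.range f) fstar)
    (E : ℕ) (hE : 0 < E)
    (η : ℝ) (hη0 : 0 < η) (hη : η ≤ 1 / (2 * L))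
    (w : ℕ → EuclideanSpace ℝ (Fin d))
    (hw : ∀ τ, w (τ + 1) = w τ - η • gradient f (w τ))
    (u : EuclideanSpace ℝ (Fin d))
    (hu : u = ∑ τ ∈ Finset.range E, gradient f (w τ))
    (hu0 : u ≠ 0)
    (wstar : EuclideanSpace ℝ (Fin d))
    (Δ : ℝ) (hΔ : Δ = f wstar - fstar)
    (Chat : ℝ) (hChat : Chat ≥ 4 * Real.sqrt (L * Δ))
    (g : EuclideanSpace ℝ (Fin d))
    (hg : g = (Chat * (E : ℝ) / ‖u‖) • u)
    (A : ℝ) (hA : A = -2 * η * ⟪g, w 0 - wstar⟫ + η ^ 2 * ‖g‖ ^ 2) :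
    (‖u‖ ≤ Chat * (E : ℝ) →
      A ≤ η * (E : ℝ) *
        (4 * η ^ 2 * L ^ 2 * (E : ℝ) ^ 2 * Δ * (Chat * (E : ℝ) / ‖u‖)
          + η * Chat ^ 2 * (E : ℝ)
          - (2 - 4 * η ^ 2 * L ^ 2 * (E : ℝ) ^ 2) * (Chat * (E : ℝ) / ‖u‖)
              * (f (w 0) - f wstar))) ∧
    (‖u‖ > Chat * (E : ℝ) →
      A ≤ -(η * (E : ℝ)) * (3 * Chat / (8 * L * (E : ℝ))) * ‖u‖) := by
  have hlow : ∀ x, fstar ≤ f x := fun x => hfstar.1 ⟨x, rfl⟩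
  have hnorm : 0 < ‖u‖ := norm_pos_iff.mpr hu0
  have hA' : A = -2 * η * (Chat * E / ‖u‖) * ⟪u, w 0 - wstar⟫ + η ^ 2 * (Chat * E) ^ 2 := by
    rw [hA, hg, real_inner_smul_left, norm_smul, Real.norm_eq_abs, mul_pow, sq_abs, div_pow,
      div_mul_cancel₀ _ (pow_ne_zero 2 hnorm.ne')]
    ring
  have hChat0 : 0 ≤ Chat := le_trans (by positivity) hChat
  constructor
  · intro _
    have hP := mul_sub_le_inner_sum_gradient hdiff hlip hw hconv hL hlow hη0.le
      (by rw [le_div_iff₀ (by positivity)] at hη; linarith) wstar E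
    rw [← hu] at hP
    have hgap : 0 ≤ f (w 0) - fstar := sub_nonneg.mpr (hlow (w 0))
    rw [hA', hΔ]
    nlinarith [mul_le_mul_of_nonneg_left hP (by positivity : 0 ≤ 2 * η * (Chat * E / ‖u‖)),
      (by positivity : 0 ≤ η ^ 3 * L ^ 2 * E ^ 3 * (Chat * E / ‖u‖) * (f (w 0) - fstar))]
  · intro hcase
    have hP := sq_norm_sum_gradient_le_inner hdiff hlip hw hconv hL hlow
      (by rwa [le_div_iff₀' (by positivity)] at hη) wstar E
    rw [← hu, ← hΔ] at hP
    have hChat_sq : 16 * L * Δ ≤ Chat ^ 2 := by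
      have hLΔ : 0 ≤ L * Δ := mul_nonneg hL.le (by rw [hΔ]; linarith [hlow wstar])
      nlinarith [Real.sq_sqrt hLΔ, Real.sqrt_nonneg (L * Δ)]
    rw [hA']
    exact clipped_step_le hL hη0.le hChat0 (by exact_mod_cast hE) hChat_sq hcase hP
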